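/- On a connected undirected graph G, if a protocol's transition function is augmented so that each activation also swaps the two agents' (updated) states, then for every ordered pair of agents (u, v) there is a finite sequence of edge activations of G after which u and v have directly interacted and every agent occupies its original node; consequently, on a connected graph with swapping, every pair of agents can be made to interact infinitely often under a weakly fair realization. -/
import Mathlib


/-- The permutation of node occupants induced by activating (in order) a list
of edges, where each activation swaps the states of the two endpoints: the
agent originally at node `a` ends up at node `(swapFold l) a`. -/
def swapFold {V : Type} [DecidableEq V] (l : List (V × V)) : Equiv.Perm V :=
  l.foldl (fun p e => (Equiv.swap e.1 e.2) * p) 1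

lemma swapFold_foldl {V : Type} [DecidableEq V] (l : List (V × V)) (x : Equiv.Perm V) :
    l.foldl (fun p e => (Equiv.swap e.1 e.2) * p) x = swapFold l * x := by
  induction l generalizing x with
  | nil => simp [swapFold]
  | cons e l ih =>
      simp only [List.foldl_cons, swapFold] at *
      rw [ih, ih (Equiv.swap e.1 e.2 * 1)]
      simp [mul_assoc]

lemma swapFold_nil {V : Type} [DecidableEq V] : swapFold ([] : List (V × V)) = 1 := rfl

lemma swapFold_cons {V : Type} [DecidableEq V] (e : V × V) (l : List (V × V)) :
    swapFold (e :: l) = swapFold l * Equiv.swap e.1 e.2 := by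
  show List.foldl _ (Equiv.swap e.1 e.2 * 1) l = _
  rw [swapFold_foldl, mul_one]

lemma swapFold_append {V : Type} [DecidableEq V] (l m : List (V × V)) :
    swapFold (l ++ m) = swapFold m * swapFold l := by
  show List.foldl _ _ (l ++ m) = _
  rw [List.foldl_append, swapFold_foldl]
  rfl

lemma swap_key {V : Type} [DecidableEq V] (G : SimpleGraph V) :
    ∀ {u v : V} (p : G.Walk u v), p.IsPath → u ≠ v →
    ∃ l : List (V × V),
      (∀ e ∈ l, G.Adj e.1 e.2) ∧
      swapFold l = 1 ∧
      ∃ i : Fin l.length,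
        ((swapFold (l.take i)) u = (l.get i).1 ∧
            (swapFold (l.take i)) v = (l.get i).2) ∨
        ((swapFold (l.take i)) u = (l.get i).2 ∧
            (swapFold (l.take i)) v = (l.get i).1) := by
  intro u v p
  induction p with
  | nil => intro _ huv; exact absurd rfl huv
  | @cons u w v h q ih =>
      intro hp huv
      rw [SimpleGraph.Walk.cons_isPath_iff] at hp
      obtain ⟨hq, hu⟩ := hp
      by_cases hwv : w = v
      · subst hwv
        refine ⟨[(u, w), (u, w)], ?_, ?_, ⟨0, by simp⟩, ?_⟩
        · intro e he
          rw [List.mem_cons, List.mem_singleton] at he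
          rcases he with he | he <;> (rw [he]; exact h)
        · simp [swapFold_cons, swapFold_nil, ← mul_assoc]
        · left
          simp [swapFold_nil]
      · obtain ⟨l', hadj, hone, i, hi⟩ := ih hq hwv
        refine ⟨(u, w) :: (l' ++ [(u, w)]), ?_, ?_, ?_⟩
        · intro e he
          rw [List.mem_cons, List.mem_append, List.mem_singleton] at he
          rcases he with he | he | he
          · rw [he]; exact h
          · exact hadj e he
          · rw [he]; exact h
        · rw [swapFold_cons, swapFold_append, swapFold_cons, swapFold_nil, hone]
          simp [mul_assoc]
        · have hilen : (i : ℕ) < l'.length := i.isLt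
          refine ⟨⟨(i : ℕ) + 1, by simp⟩, ?_⟩
          have htake : ((u, w) :: (l' ++ [(u, w)])).take ((i : ℕ) + 1)
              = (u, w) :: l'.take (i : ℕ) := by
            simp [List.take_append_of_le_length (le_of_lt hilen)]
          have hget : ((u, w) :: (l' ++ [(u, w)])).get ⟨(i : ℕ) + 1, by simp⟩
              = l'.get i := by
            simp [List.getElem_append_left hilen]
          have hsf : swapFold ((u, w) :: l'.take (i : ℕ))
              = swapFold (l'.take (i : ℕ)) * Equiv.swap u w := swapFold_cons _ _
          have huv' : v ≠ u := fun hh => huv hh.symm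
          have hwv' : v ≠ w := fun hh => hwv hh.symm
          have happu : swapFold (((u, w) :: (l' ++ [(u, w)])).take ((i : ℕ) + 1)) u
              = swapFold (l'.take (i : ℕ)) w := by
            rw [htake, hsf]
            simp [Equiv.swap_apply_left]
          have happv : swapFold (((u, w) :: (l' ++ [(u, w)])).take ((i : ℕ) + 1)) v
              = swapFold (l'.take (i : ℕ)) v := by
            rw [htake, hsf]
            simp [Equiv.swap_apply_of_ne_of_ne huv' hwv']
          rcases hi with ⟨h1, h2⟩ | ⟨h1, h2⟩
          · left
            constructor
            · rw [happu, hget]; exact h1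
            · rw [happv, hget]; exact h2
          · right
            constructor
            · rw [happu, hget]; exact h1
            · rw [happv, hget]; exact h2

/-- on a connected undirected graph with state-swapping
activations, for every ordered pair of distinct agents `(u, v)` there is a
finite sequence of edge activations of `G` during which the agents that
started at `u` and at `v` directly interact (at some step they occupy the two
endpoints of the activated edge), and after which every agent occupies its
original node. -/
theorem swap_protocol_interaction
    {V : Type} [DecidableEq V] (G : SimpleGraph V) (hconn : G.Connected)
    (u v : V) (huv : u ≠ v) :
    ∃ l : List (V × V),
      (∀ e ∈ l, G.Adj e.1 e.2) ∧
      swapFold l = 1 ∧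
      ∃ i : Fin l.length,
        ((swapFold (l.take i)) u = (l.get i).1 ∧
            (swapFold (l.take i)) v = (l.get i).2) ∨
        ((swapFold (l.take i)) u = (l.get i).2 ∧
            (swapFold (l.take i)) v = (l.get i).1) := by
  obtain ⟨w⟩ := hconn u v
  exact swap_key G w.toPath.1 w.toPath.2 huv
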